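/- Let ρ_t be a family of maps satisfying constant preservation (ρ_t(ξ)=−ξ for ξ that is F_t-measurable) and convexity (ρ_t(θξ+(1−θ)η) ≤ θρ_t(ξ)+(1−θ)ρ_t(η) for θ∈(0,1)). Then ρ satisfies translation invariance: for any ζ that is F_t-measurable and any ξ, ρ_t(ξ+ζ)=ρ_t(ξ)−ζ, provided x ↦ ρ_t(xξ) is continuous in x (which follows from convexity). -/

import Mathlib

/-!
Fix a direction `u` along which `ρ (c • u) = -c`. Writing `x + c • u` as the convex combination
`(1 - t) • ((1 - t)⁻¹ • x) + t • ((c / t) • u)` gives `ρ (x + c • u) ≤ (1 - t) ρ ((1 - t)⁻¹ • x) - c`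
for every `t ∈ (0, 1)`. The map `s ↦ ρ (s • x)` is a convex function on `ℝ`, hence continuous, so
letting `t → 0` yields `ρ (x + c • u) ≤ ρ x - c`; applied to `x + c • u` and `-c` this is the
reverse inequality.
-/

open Filter Topology Set

lemma convexOn_univ_of_forall_lt_one {E : Type*} [AddCommGroup E] [Module ℝ E] {f : E → ℝ}
    (hf : ∀ x y : E, ∀ θ : ℝ, 0 < θ → θ < 1 →
      f (θ • x + (1 - θ) • y) ≤ θ * f x + (1 - θ) * f y) :
    ConvexOn ℝ univ f := by
  refine convexOn_iff_forall_pos.2 ⟨convex_univ, fun x _ y _ a b ha hb hab => ?_⟩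
  obtain rfl : b = 1 - a := by linarith
  exact hf x y a ha (by linarith)

namespace ConvexOn

variable {E : Type*} [AddCommGroup E] [Module ℝ E] {f : E → ℝ}

lemma continuous_smul_left (hf : ConvexOn ℝ univ f) (x : E) :
    Continuous fun s : ℝ => f (s • x) := by
  have hline : ConvexOn ℝ univ fun s : ℝ => f (s • x) :=
    hf.comp_linearMap (LinearMap.toSpanSingleton ℝ E x)
  exact continuousOn_univ.1 (hline.continuousOn isOpen_univ)

lemma map_add_le_of_mem_Ioo (hf : ConvexOn ℝ univ f) {t : ℝ} (ht : t ∈ Ioo (0 : ℝ) 1) (x y : E) :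
    f (x + y) ≤ (1 - t) * f ((1 - t)⁻¹ • x) + t * f (t⁻¹ • y) := by
  obtain ⟨ht0, ht1⟩ := ht
  have hdecomp : (1 - t) • ((1 - t)⁻¹ • x) + t • (t⁻¹ • y) = x + y := by
    rw [smul_inv_smul₀ (sub_ne_zero.2 ht1.ne'), smul_inv_smul₀ ht0.ne']
  simpa only [hdecomp, smul_eq_mul] using hf.2 (mem_univ ((1 - t)⁻¹ • x)) (mem_univ (t⁻¹ • y))
    (sub_pos.2 ht1).le ht0.le (sub_add_cancel 1 t)

variable {u : E}

lemma map_add_smul_le (hf : ConvexOn ℝ univ f) (hu : ∀ c : ℝ, f (c • u) = -c) (x : E) (c : ℝ) :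
    f (x + c • u) ≤ f x - c := by
  have hbound : ∀ t ∈ Ioo (0 : ℝ) 1, f (x + c • u) ≤ (1 - t) * f ((1 - t)⁻¹ • x) - c := by
    intro t ht
    have hcash : t * f (t⁻¹ • c • u) = -c := by
      rw [smul_smul, hu]
      field_simp [ht.1.ne']
    linarith [hf.map_add_le_of_mem_Ioo ht x (c • u)]
  have hlim : Tendsto (fun t : ℝ => (1 - t) * f ((1 - t)⁻¹ • x) - c) (𝓝[>] 0) (𝓝 (f x - c)) := by
    have hcont : ContinuousAt (fun t : ℝ => (1 - t) * f ((1 - t)⁻¹ • x) - c) 0 := by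
      have hinv : ContinuousAt (fun t : ℝ => (1 - t)⁻¹) 0 := by fun_prop (disch := norm_num)
      exact ((continuous_const.sub continuous_id).continuousAt.mul
        ((hf.continuous_smul_left x).continuousAt.comp hinv)).sub continuousAt_const
    simpa using hcont.tendsto.mono_left nhdsWithin_le_nhds
  exact ge_of_tendsto hlim (Filter.mem_of_superset (Ioo_mem_nhdsGT one_pos) hbound)

lemma map_add_smul (hf : ConvexOn ℝ univ f) (hu : ∀ c : ℝ, f (c • u) = -c) (x : E) (c : ℝ) :
    f (x + c • u) = f x - c := by
  refine le_antisymm (hf.map_add_smul_le hu x c) ?_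
  have h := hf.map_add_smul_le hu (x + c • u) (-c)
  rw [add_assoc, ← add_smul, add_neg_cancel, zero_smul, add_zero] at h
  linarith

end ConvexOn

theorem stmt_0_general {Ω : Type*} (ρ : (Ω → ℝ) → ℝ)
    (hconst : ∀ c : ℝ, ρ (fun _ => c) = -c)
    (hconv : ∀ ξ η : Ω → ℝ, ∀ θ : ℝ, 0 < θ → θ < 1 →
      ρ (θ • ξ + (1 - θ) • η) ≤ θ * ρ ξ + (1 - θ) * ρ η) :
    ∀ (ξ : Ω → ℝ) (c : ℝ), ρ (ξ + fun _ => c) = ρ ξ - c := by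
  intro ξ c
  have hsmul : ∀ a : ℝ, (fun _ : Ω => a) = a • fun _ => 1 := fun a => by ext; simp
  rw [hsmul]
  refine (convexOn_univ_of_forall_lt_one hconv).map_add_smul (fun a => ?_) ξ c
  rw [← hsmul, hconst]

/-- Translation invariance from constant preservation, convexity and
continuity of `x ↦ ρ (x • ξ)`. -/
theorem stmt_0 {Ω : Type*} (ρ : (Ω → ℝ) → ℝ)
    (hconst : ∀ c : ℝ, ρ (fun _ => c) = -c)
    (hconv : ∀ ξ η : Ω → ℝ, ∀ θ : ℝ, 0 < θ → θ < 1 →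
      ρ (θ • ξ + (1 - θ) • η) ≤ θ * ρ ξ + (1 - θ) * ρ η)
    (hcont : ∀ ξ : Ω → ℝ, Continuous fun x : ℝ => ρ (x • ξ)) :
    ∀ (ξ : Ω → ℝ) (c : ℝ), ρ (ξ + fun _ => c) = ρ ξ - c :=
  stmt_0_general ρ hconst hconv
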